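/- arXiv:1811.10391 — 2 statements merged into one kernel-verified Lean document; each statement's English description precedes it below -/
import Mathlib

section
/- Let h : ℝ → ℝ be given by h(θ) = cos(ρθ) for |θ| < π/(2ρ) and h(θ) = 0 for π/(2ρ) ≤ |θ| ≤ π (extended 2π-periodically), where ρ ≥ 1/2. Then h is ρ-trigonometrically convex: for all θ₁ < θ < θ₂ with θ₂ - θ₁ < π/ρ, h(θ) ≤ [sin(ρ(θ₂-θ))·h(θ₁) + sin(ρ(θ-θ₁))·h(θ₂)] / sin(ρ(θ₂-θ₁)). -/
open Real

set_option maxHeartbeats 1600000 in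
/-- The `2π`-periodic truncated cosine `h(θ) = cos(ρθ̃)` for `|θ̃| < π/(2ρ)` and `0`
otherwise (where `θ̃ = θ - 2π·round(θ/(2π))` is the representative of `θ` in `[-π,π]`)
is `ρ`-trigonometrically convex for `ρ ≥ 1/2`. -/
theorem stmt_9 (ρ : ℝ) (hρ : 1/2 ≤ ρ)
    (h : ℝ → ℝ)
    (hdef : ∀ θ : ℝ,
      h θ = if |θ - 2 * π * (round (θ / (2 * π)) : ℤ)| < π / (2 * ρ)
            then Real.cos (ρ * (θ - 2 * π * (round (θ / (2 * π)) : ℤ)))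
            else 0)
    (θ₁ θ θ₂ : ℝ) (h1 : θ₁ < θ) (h2 : θ < θ₂) (h3 : θ₂ - θ₁ < π / ρ) :
    h θ ≤ (Real.sin (ρ * (θ₂ - θ)) * h θ₁ + Real.sin (ρ * (θ - θ₁)) * h θ₂) /
      Real.sin (ρ * (θ₂ - θ₁)) := by
  have hπ := Real.pi_pos
  have hρ0 : (0:ℝ) < ρ := lt_of_lt_of_le (by norm_num) hρ
  have hab : ρ * (θ₂ - θ₁) < π := by
    have := (lt_div_iff₀ hρ0).mp h3
    linarith
  have hsab : 0 < Real.sin (ρ * (θ₂ - θ₁)) :=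
    Real.sin_pos_of_pos_of_lt_pi (by nlinarith) hab
  have hsa : 0 < Real.sin (ρ * (θ - θ₁)) :=
    Real.sin_pos_of_pos_of_lt_pi (by nlinarith) (by nlinarith)
  have hsb : 0 < Real.sin (ρ * (θ₂ - θ)) :=
    Real.sin_pos_of_pos_of_lt_pi (by nlinarith) (by nlinarith)
  -- cos nonneg on the cap
  have hcospos : ∀ s : ℝ, |s| < π / (2*ρ) → 0 ≤ Real.cos (ρ * s) := by
    intro s hs
    apply Real.cos_nonneg_of_mem_Icc
    have h1 : -(π/(2*ρ)) < s := (abs_lt.mp hs).1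
    have h2 : s < π/(2*ρ) := (abs_lt.mp hs).2
    constructor
    · have : ρ * (-(π/(2*ρ))) ≤ ρ * s := by nlinarith
      have e : ρ * (π/(2*ρ)) = π/2 := by field_simp
      simp only [mul_neg] at this
      rw [e] at this
      linarith
    · have : ρ * s ≤ ρ * (π/(2*ρ)) := by nlinarith
      have e : ρ * (π/(2*ρ)) = π/2 := by field_simp
      linarith [this, e ▸ this]
  -- h is nonnegative
  have hnn : ∀ t, 0 ≤ h t := by
    intro t
    rw [hdef t]
    split_ifs with hc
    · exact hcospos _ hc
    · exact le_refl 0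
  set n : ℤ := round (θ / (2 * π)) with hn
  by_cases hθc : |θ - 2 * π * (n:ℝ)| < π / (2 * ρ)
  · -- main case
    have hθh : h θ = Real.cos (ρ * (θ - 2 * π * (n:ℝ))) := by
      rw [hdef θ, ← hn, if_pos hθc]
    -- key lemma
    have key : ∀ t : ℝ, |t - θ| < π / ρ → Real.cos (ρ * (t - 2 * π * (n:ℝ))) ≤ h t := by
      intro t ht
      have hub : |t - 2 * π * (n:ℝ)| < 3 * π / (2 * ρ) := by
        have : |t - 2 * π * (n:ℝ)| ≤ |t - θ| + |θ - 2 * π * (n:ℝ)| := by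
          calc |t - 2 * π * (n:ℝ)| = |(t - θ) + (θ - 2 * π * (n:ℝ))| := by ring_nf
            _ ≤ |t - θ| + |θ - 2 * π * (n:ℝ)| := abs_add_le _ _
        have e : π / ρ + π/(2*ρ) = 3*π/(2*ρ) := by field_simp; ring
        linarith
      have hcos0 : π/(2*ρ) ≤ |t - 2 * π * (n:ℝ)| → Real.cos (ρ * (t - 2 * π * (n:ℝ))) ≤ 0 := by
        intro hlb
        have e1 : Real.cos (ρ * (t - 2 * π * (n:ℝ))) = Real.cos (ρ * |t - 2 * π * (n:ℝ)|) := by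
          rw [← Real.cos_abs, abs_mul, abs_of_pos hρ0]
        rw [e1]
        apply Real.cos_nonpos_of_pi_div_two_le_of_le
        · have : ρ * (π/(2*ρ)) = π/2 := by field_simp
          nlinarith
        · have : ρ * (3*π/(2*ρ)) = 3*π/2 := by field_simp
          nlinarith
      rw [hdef t]
      set m : ℤ := round (t / (2 * π)) with hm
      have hm_abs : |t - 2 * π * (m:ℝ)| ≤ π := by
        have h2π : (0:ℝ) < 2 * π := by linarith
        have := abs_sub_round (t / (2 * π))
        have e : t - 2 * π * (m:ℝ) = (2*π) * (t / (2*π) - (m:ℝ)) := by field_simp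
        rw [e, abs_mul, abs_of_pos h2π]
        nlinarith
      have hmn_far : m ≠ n → π ≤ |t - 2 * π * (n:ℝ)| := by
        intro hmn
        have h1 : (1:ℝ) ≤ |(m:ℝ) - (n:ℝ)| := by
          have : m - n ≠ 0 := sub_ne_zero.mpr hmn
          have := Int.one_le_abs this
          have h2 : ((1:ℤ):ℝ) ≤ ((|m - n| : ℤ) : ℝ) := by exact_mod_cast this
          rw [Int.cast_abs] at h2
          push_cast at h2
          simpa using h2
        have : |2 * π * ((m:ℝ) - (n:ℝ))| ≤ |t - 2 * π * (m:ℝ)| + |t - 2 * π * (n:ℝ)| := by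
          calc |2 * π * ((m:ℝ) - (n:ℝ))| = |(t - 2 * π * (n:ℝ)) - (t - 2 * π * (m:ℝ))| := by
                ring_nf
            _ ≤ |t - 2 * π * (n:ℝ)| + |t - 2 * π * (m:ℝ)| := abs_sub _ _
            _ = |t - 2 * π * (m:ℝ)| + |t - 2 * π * (n:ℝ)| := by ring
        have h2 : 2 * π ≤ |2 * π * ((m:ℝ) - (n:ℝ))| := by
          rw [abs_mul, abs_of_pos (by linarith : (0:ℝ) < 2*π)]
          nlinarith
        linarith
      split_ifs with hc
      · rcases eq_or_ne m n with heq | hne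
        · rw [heq]
        · have hge : π/(2*ρ) ≤ |t - 2 * π * (n:ℝ)| := by
            have hπρ : π/(2*ρ) ≤ π := by
              rw [div_le_iff₀ (by linarith : (0:ℝ) < 2*ρ)]
              nlinarith
            linarith [hmn_far hne]
          exact le_trans (hcos0 hge) (hcospos _ hc)
      · rcases eq_or_ne m n with heq | hne
        · rw [heq] at hc
          exact hcos0 (le_of_not_gt hc)
        · apply hcos0
          have hπρ : π/(2*ρ) ≤ π := by
            rw [div_le_iff₀ (by linarith : (0:ℝ) < 2*ρ)]
            nlinarith
          linarith [hmn_far hne]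
    have k1 : Real.cos (ρ * (θ₁ - 2 * π * (n:ℝ))) ≤ h θ₁ := by
      apply key
      rw [abs_sub_comm, abs_of_pos (by linarith)]
      linarith
    have k2 : Real.cos (ρ * (θ₂ - 2 * π * (n:ℝ))) ≤ h θ₂ := by
      apply key
      rw [abs_of_pos (by linarith)]
      linarith
    rw [hθh, le_div_iff₀ hsab]
    have ident : Real.cos (ρ * (θ - 2 * π * (n:ℝ))) * Real.sin (ρ * (θ₂ - θ₁)) =
        Real.sin (ρ * (θ₂ - θ)) * Real.cos (ρ * (θ₁ - 2 * π * (n:ℝ))) +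
        Real.sin (ρ * (θ - θ₁)) * Real.cos (ρ * (θ₂ - 2 * π * (n:ℝ))) := by
      have e1 : ρ * (θ₁ - 2 * π * (n:ℝ)) = ρ * (θ - 2 * π * (n:ℝ)) - ρ * (θ - θ₁) := by ring
      have e2 : ρ * (θ₂ - 2 * π * (n:ℝ)) = ρ * (θ - 2 * π * (n:ℝ)) + ρ * (θ₂ - θ) := by ring
      have e3 : ρ * (θ₂ - θ₁) = ρ * (θ - θ₁) + ρ * (θ₂ - θ) := by ring
      rw [e1, e2, e3, Real.sin_add, Real.cos_sub, Real.cos_add]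
      ring
    calc Real.cos (ρ * (θ - 2 * π * (n:ℝ))) * Real.sin (ρ * (θ₂ - θ₁))
        = Real.sin (ρ * (θ₂ - θ)) * Real.cos (ρ * (θ₁ - 2 * π * (n:ℝ))) +
          Real.sin (ρ * (θ - θ₁)) * Real.cos (ρ * (θ₂ - 2 * π * (n:ℝ))) := ident
      _ ≤ Real.sin (ρ * (θ₂ - θ)) * h θ₁ + Real.sin (ρ * (θ - θ₁)) * h θ₂ := by
          have := mul_le_mul_of_nonneg_left k1 hsb.le
          have := mul_le_mul_of_nonneg_left k2 hsa.le
          linarith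
  · have hθh : h θ = 0 := by rw [hdef θ, ← hn, if_neg hθc]
    rw [hθh]
    apply div_nonneg _ hsab.le
    have := hnn θ₁; have := hnn θ₂
    nlinarith [mul_nonneg hsb.le (hnn θ₁), mul_nonneg hsa.le (hnn θ₂)]
end

section
/- If 0 ≤ ρ ≤ ρ' and h : ℝ → ℝ is a nonnegative ρ-trigonometrically convex function, then h is ρ'-trigonometrically convex. -/
/-!
For `0 < ρ ≤ ρ'` put `c = ρ / ρ'`. Since `x ↦ sin (c x) / sin x` is nondecreasing on `(0, π)`,
each weight `sin (ρ s) / sin (ρ t)` (`0 < s < t`, `ρ' t < π`) of the `ρ`-trigonometric bound is at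
most the corresponding weight `sin (ρ' s) / sin (ρ' t)` of the `ρ'`-bound; as `h ≥ 0`, the
`ρ`-bound is thus at most the `ρ'`-bound. For `ρ = 0` the function is a nonnegative constant and
the claim reduces to `sin (x + y) ≤ sin x + sin y`.
-/

open Real Set

lemma sin_mul_mul_cos_le_mul_cos_mul_mul_sin {c x : ℝ} (hc0 : 0 ≤ c) (hc1 : c ≤ 1)
    (hx0 : 0 ≤ x) (hxπ : x ≤ π) : sin (c * x) * cos x ≤ c * cos (c * x) * sin x := by
  set φ : ℝ → ℝ := fun y => c * cos (c * y) * sin y - sin (c * y) * cos y with hφ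
  have hφ' : ∀ y, HasDerivAt φ ((1 - c ^ 2) * (sin (c * y) * sin y)) y := by
    intro y
    have hcy : HasDerivAt (fun y : ℝ => c * y) c y := by
      simpa using (hasDerivAt_id y).const_mul c
    exact ((hcy.cos.const_mul c).mul (hasDerivAt_sin y)).sub
      (hcy.sin.mul (hasDerivAt_cos y)) |>.congr_deriv (by ring)
  have hmono : MonotoneOn φ (Icc 0 π) := by
    refine monotoneOn_of_hasDerivWithinAt_nonneg (convex_Icc 0 π) (by fun_prop)
      (fun y _ => (hφ' y).hasDerivWithinAt) fun y hy => ?_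
    rw [interior_Icc] at hy
    have hcy : c * y ≤ π := by nlinarith [hy.1, hy.2]
    exact mul_nonneg (by nlinarith) (mul_nonneg
      (sin_nonneg_of_nonneg_of_le_pi (by nlinarith [hy.1]) hcy)
      (sin_nonneg_of_nonneg_of_le_pi hy.1.le hy.2.le))
  have := hmono ⟨le_rfl, pi_pos.le⟩ ⟨hx0, hxπ⟩ hx0
  simp only [hφ, mul_zero, sin_zero, cos_zero, mul_one, sub_zero] at this
  linarith

lemma monotoneOn_sin_mul_div_sin {c : ℝ} (hc0 : 0 ≤ c) (hc1 : c ≤ 1) :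
    MonotoneOn (fun x => sin (c * x) / sin x) (Ioo 0 π) := by
  refine monotoneOn_of_hasDerivWithinAt_nonneg (convex_Ioo 0 π)
    (f' := fun x => (c * cos (c * x) * sin x - sin (c * x) * cos x) / sin x ^ 2) ?_ ?_ ?_
  · exact ContinuousOn.div (by fun_prop) (by fun_prop)
      fun x hx => (sin_pos_of_pos_of_lt_pi hx.1 hx.2).ne'
  · rw [interior_Ioo]
    intro x hx
    have hcx : HasDerivAt (fun y : ℝ => c * y) c x := by
      simpa using (hasDerivAt_id x).const_mul c
    refine HasDerivAt.hasDerivWithinAt ?_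
    exact (hcx.sin.div (hasDerivAt_sin x) (sin_pos_of_pos_of_lt_pi hx.1 hx.2).ne').congr_deriv
      (by ring)
  · rw [interior_Ioo]
    exact fun x hx => div_nonneg
      (sub_nonneg.2 (sin_mul_mul_cos_le_mul_cos_mul_mul_sin hc0 hc1 hx.1.le hx.2.le))
      (sq_nonneg _)

lemma sin_mul_mul_sin_mul_le {ρ ρ' s t : ℝ} (hρ : 0 ≤ ρ) (hρρ' : ρ ≤ ρ') (hρ' : 0 < ρ')
    (hs : 0 < s) (hst : s ≤ t) (ht : ρ' * t < π) :
    sin (ρ * s) * sin (ρ' * t) ≤ sin (ρ' * s) * sin (ρ * t) := by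
  have hx : ρ' * s ∈ Ioo 0 π := ⟨by positivity, by nlinarith⟩
  have hy : ρ' * t ∈ Ioo 0 π := ⟨by nlinarith, ht⟩
  have hc : ∀ u, ρ / ρ' * (ρ' * u) = ρ * u := fun u => by field_simp
  have := monotoneOn_sin_mul_div_sin (div_nonneg hρ hρ'.le) ((div_le_one hρ').2 hρρ') hx hy
    (by nlinarith)
  simp only [hc] at this
  rw [div_le_div_iff₀ (sin_pos_of_pos_of_lt_pi hx.1 hx.2)
    (sin_pos_of_pos_of_lt_pi hy.1 hy.2)] at this
  linarith

lemma trig_combination_le_of_le {ρ ρ' a b θ₁ θ θ₂ : ℝ} (hρ : 0 < ρ) (hρρ' : ρ ≤ ρ')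
    (ha : 0 ≤ a) (hb : 0 ≤ b) (h₁ : θ₁ < θ) (h₂ : θ < θ₂) (hπ : ρ' * (θ₂ - θ₁) < π) :
    (sin (ρ * (θ₂ - θ)) * a + sin (ρ * (θ - θ₁)) * b) / sin (ρ * (θ₂ - θ₁)) ≤
      (sin (ρ' * (θ₂ - θ)) * a + sin (ρ' * (θ - θ₁)) * b) / sin (ρ' * (θ₂ - θ₁)) := by
  have hρ' : 0 < ρ' := hρ.trans_le hρρ'
  have hwidth : 0 < θ₂ - θ₁ := by linarith
  have hleft := sin_mul_mul_sin_mul_le hρ.le hρρ' hρ' (sub_pos.2 h₂) (by linarith) hπ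
  have hright := sin_mul_mul_sin_mul_le hρ.le hρρ' hρ' (sub_pos.2 h₁) (by linarith) hπ
  rw [div_le_div_iff₀ (sin_pos_of_pos_of_lt_pi (by positivity) (by nlinarith))
    (sin_pos_of_pos_of_lt_pi (by positivity) hπ)]
  nlinarith [mul_le_mul_of_nonneg_right hleft ha, mul_le_mul_of_nonneg_right hright hb]

lemma sin_add_le_sin_add_sin {x y : ℝ} (hx : 0 ≤ sin x) (hy : 0 ≤ sin y) :
    sin (x + y) ≤ sin x + sin y := by
  rw [sin_add]
  nlinarith [cos_le_one x, cos_le_one y]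

/-- If `0 ≤ ρ ≤ ρ'` (`ρ' > 0`) and `h : ℝ → ℝ` is a nonnegative
`ρ`-trigonometrically convex function (a nonnegative constant when `ρ = 0`),
then `h` is `ρ'`-trigonometrically convex. -/
theorem stmt_13 (ρ ρ' : ℝ) (hρ : 0 ≤ ρ) (hρρ' : ρ ≤ ρ') (hρ' : 0 < ρ')
    (h : ℝ → ℝ) (hpos : ∀ θ, 0 ≤ h θ)
    (hconv : if ρ = 0 then (∀ θ θ' : ℝ, h θ = h θ')
      else ∀ θ₁ θ θ₂ : ℝ, θ₁ < θ → θ < θ₂ → θ₂ - θ₁ < π / ρ →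
        h θ ≤ (Real.sin (ρ * (θ₂ - θ)) * h θ₁ + Real.sin (ρ * (θ - θ₁)) * h θ₂) /
          Real.sin (ρ * (θ₂ - θ₁))) :
    ∀ θ₁ θ θ₂ : ℝ, θ₁ < θ → θ < θ₂ → θ₂ - θ₁ < π / ρ' →
      h θ ≤ (Real.sin (ρ' * (θ₂ - θ)) * h θ₁ + Real.sin (ρ' * (θ - θ₁)) * h θ₂) /
        Real.sin (ρ' * (θ₂ - θ₁)) := by
  intro θ₁ θ θ₂ h₁ h₂ hwidth
  have hπ : ρ' * (θ₂ - θ₁) < π := by rwa [lt_div_iff₀' hρ'] at hwidth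
  split_ifs at hconv with hρ0
  · have hsin_nonneg : ∀ u, 0 < u → u < θ₂ - θ₁ → 0 ≤ sin (ρ' * u) := fun u hu hu' =>
      sin_nonneg_of_nonneg_of_le_pi (by positivity) (by nlinarith)
    have hsub := sin_add_le_sin_add_sin (hsin_nonneg (θ₂ - θ) (by linarith) (by linarith))
      (hsin_nonneg (θ - θ₁) (by linarith) (by linarith))
    rw [← mul_add, sub_add_sub_cancel] at hsub
    rw [hconv θ₁ θ, hconv θ₂ θ, ← add_mul, le_div_iff₀
      (sin_pos_of_pos_of_lt_pi (mul_pos hρ' (by linarith)) hπ)]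
    nlinarith [hpos θ]
  · have hρpos : 0 < ρ := lt_of_le_of_ne hρ (Ne.symm hρ0)
    calc h θ ≤ _ := hconv θ₁ θ θ₂ h₁ h₂
          (hwidth.trans_le (div_le_div_of_nonneg_left pi_pos.le hρpos hρρ'))
      _ ≤ _ := trig_combination_le_of_le hρpos hρρ' (hpos θ₁) (hpos θ₂) h₁ h₂ hπ
end
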